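/- arXiv:1202.0621 — 2 statements merged into one kernel-verified Lean document; each statement's English description precedes it below -/
import Mathlib

section
/- For any finite family of events {A_s}_{s ∈ S} and two distinguished indices s1, s2 ∈ S, the third-order Bonferroni-type bound holds: P(⋃_{s ∈ S} A_s) ≤ −(|S| − 3)·P(A_{s1} ∪ A_{s2}) + ∑_{s ∉ {s1,s2}} P(A_{s1} ∪ A_{s2} ∪ A_s). -/
open MeasureTheory

/-!
Put `B = A s₁ ∪ A s₂`. Every point of `⋃ A_s` lies in `B` or in some `A_s \ B` with `s ≠ s₁, s₂`,
so the union bound gives `P(⋃ A_s) ≤ P(B) + ∑_{s ≠ s₁, s₂} P(A_s \ B)`. Since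
`P(B ∪ A_s) = P(B) + P(A_s \ B)`, the right-hand side equals
`-(|S| - 3) P(B) + ∑_{s ≠ s₁, s₂} P(B ∪ A_s)`.
-/

open Finset

section

variable {Ω ι : Type*} [MeasurableSpace Ω] {μ : Measure Ω} [IsFiniteMeasure μ]
  {S T : Finset ι} {A : ι → Set Ω} {B : Set Ω}

lemma measureReal_biUnion_le_add_sum_sdiff (hT : ∀ s ∈ S, s ∉ T → A s ⊆ B) :
    μ.real (⋃ s ∈ S, A s) ≤ μ.real B + ∑ s ∈ T, μ.real (A s \ B) := by
  have hcover : (⋃ s ∈ S, A s) ⊆ B ∪ ⋃ s ∈ T, A s \ B := by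
    intro x hx
    obtain ⟨s, hs, hxs⟩ := Set.mem_iUnion₂.1 hx
    by_cases hxB : x ∈ B
    · exact Or.inl hxB
    · have hsT : s ∈ T := by_contra fun hsT => hxB (hT s hs hsT hxs)
      exact Or.inr (Set.mem_biUnion hsT ⟨hxs, hxB⟩)
  calc μ.real (⋃ s ∈ S, A s)
      ≤ μ.real (B ∪ ⋃ s ∈ T, A s \ B) := measureReal_mono hcover
    _ ≤ μ.real B + μ.real (⋃ s ∈ T, A s \ B) := measureReal_union_le _ _
    _ ≤ μ.real B + ∑ s ∈ T, μ.real (A s \ B) := by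
      gcongr
      exact measureReal_biUnion_finset_le _ _

lemma measureReal_biUnion_le_sum_measureReal_union (hB : MeasurableSet B)
    (hT : ∀ s ∈ S, s ∉ T → A s ⊆ B) :
    μ.real (⋃ s ∈ S, A s) ≤ -((#T : ℝ) - 1) * μ.real B + ∑ s ∈ T, μ.real (B ∪ A s) := by
  have hsum : ∑ s ∈ T, μ.real (B ∪ A s) = #T * μ.real B + ∑ s ∈ T, μ.real (A s \ B) := by
    rw [sum_congr rfl fun s _ => (measureReal_add_sdiff (μ := μ) (t := A s) hB).symm,
      sum_add_distrib, sum_const, nsmul_eq_mul]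
  linarith [measureReal_biUnion_le_add_sum_sdiff (μ := μ) hT]

end

/-- Third-order Bonferroni-type bound:
`P(⋃ A_s) ≤ -(|S| - 3) P(A_{s1} ∪ A_{s2})
           + ∑_{s ∉ {s1,s2}} P(A_{s1} ∪ A_{s2} ∪ A_s)`. -/
theorem bonferroni_third_order
    {Ω ι : Type*} [MeasurableSpace Ω] [DecidableEq ι]
    (P : Measure Ω) [IsProbabilityMeasure P]
    (S : Finset ι) (A : ι → Set Ω) (hA : ∀ s, MeasurableSet (A s))
    (s1 s2 : ι) (hs1 : s1 ∈ S) (hs2 : s2 ∈ S) (hne : s1 ≠ s2) :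
    (P (⋃ s ∈ S, A s)).toReal ≤
      -((S.card : ℝ) - 3) * (P (A s1 ∪ A s2)).toReal +
        ∑ s ∈ (S.erase s1).erase s2, (P (A s1 ∪ A s2 ∪ A s)).toReal := by
  have hcard : #((S.erase s1).erase s2) + 2 = #S := by
    rw [← card_erase_add_one hs1, ← card_erase_add_one (mem_erase.2 ⟨hne.symm, hs2⟩)]
  have hcardR : (#((S.erase s1).erase s2) : ℝ) - 1 = #S - 3 := by
    rw [← hcard]; push_cast; ring
  have hT : ∀ s ∈ S, s ∉ (S.erase s1).erase s2 → A s ⊆ A s1 ∪ A s2 := by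
    intro s hs hsT
    obtain rfl | rfl : s = s1 ∨ s = s2 := by simp only [mem_erase, hs, and_true] at hsT; tauto
    exacts [Set.subset_union_left, Set.subset_union_right]
  have := measureReal_biUnion_le_sum_measureReal_union (μ := P) ((hA s1).union (hA s2)) hT
  rwa [hcardR] at this
end

section
/- If three distinct BPSK codeword images s0, s1, s2 of a binary linear code form a right angle at s0 together with the existence of the completing codeword, then the four points s0, s1, s2, s3 (where s3 is the image of c1 + c2) satisfy: s1 − s0 is orthogonal to s2 − s0, s3 − s1 = s2 − s0, and s3 − s2 = s1 − s0, hence they are the vertices of a rectangle. -/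
open scoped RealInnerProductSpace

/-- The BPSK map `c ↦ (1 - 2 c_t)_t`. -/
noncomputable def bpsk (n : ℕ) (c : Fin n → ZMod 2) : EuclideanSpace ℝ (Fin n) :=
  WithLp.toLp 2 (fun t => 1 - 2 * ((c t).val : ℝ))

/-!
Writing `v(c) = (c_t.val)_t ∈ {0,1}ⁿ`, we have `bpsk c - bpsk 0 = -2 v(c)`, so the right angle at
`s0` says `∑ₜ v(c1)_t v(c2)_t = 0`. The summands are nonnegative, hence `c1` and `c2` have disjoint
supports, and on disjoint supports `v(c1 + c2) = v(c1) + v(c2)`: the image of `c1 + c2` is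
`s1 + s2 - s0`, which is the fourth vertex of the rectangle.
-/

namespace bpsk

variable {n : ℕ}

theorem sub_zero_apply (c : Fin n → ZMod 2) (t : Fin n) :
    (bpsk n c - bpsk n 0) t = -2 * ((c t).val : ℝ) := by
  simp [bpsk]

theorem inner_sub_zero (c c' : Fin n → ZMod 2) :
    ⟪bpsk n c - bpsk n 0, bpsk n c' - bpsk n 0⟫ = 4 * ∑ t, ((c t).val : ℝ) * (c' t).val := by
  simp only [PiLp.inner_apply, sub_zero_apply, RCLike.inner_apply, conj_trivial, Finset.mul_sum]
  exact Finset.sum_congr rfl fun _ _ => by ring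

theorem disjoint_of_inner_eq_zero {c c' : Fin n → ZMod 2}
    (h : ⟪bpsk n c - bpsk n 0, bpsk n c' - bpsk n 0⟫ = 0) (t : Fin n) :
    c t = 0 ∨ c' t = 0 := by
  rw [inner_sub_zero, mul_eq_zero, or_iff_right (by norm_num),
    Finset.sum_eq_zero_iff_of_nonneg fun _ _ => by positivity] at h
  simpa only [mul_eq_zero, Nat.cast_eq_zero, ZMod.val_eq_zero] using h t (Finset.mem_univ t)

theorem add_of_disjoint {c c' : Fin n → ZMod 2} (h : ∀ t, c t = 0 ∨ c' t = 0) :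
    bpsk n (c + c') = bpsk n c + bpsk n c' - bpsk n 0 := by
  ext t
  rcases h t with h | h <;> simp [bpsk, h]

end bpsk

theorem bpsk_rectangle_general (n : ℕ)
    (c1 c2 : Fin n → ZMod 2)
    (hright : ⟪bpsk n c1 - bpsk n 0, bpsk n c2 - bpsk n 0⟫ = 0) :
    ⟪bpsk n c1 - bpsk n 0, bpsk n c2 - bpsk n 0⟫ = 0 ∧
      bpsk n (c1 + c2) - bpsk n c1 = bpsk n c2 - bpsk n 0 ∧
      bpsk n (c1 + c2) - bpsk n c2 = bpsk n c1 - bpsk n 0 := by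
  have h3 := bpsk.add_of_disjoint (bpsk.disjoint_of_inner_eq_zero hright)
  exact ⟨hright, by rw [h3]; abel, by rw [h3]; abel⟩

/-- If the BPSK images of distinct codewords `0, c1, c2` form a right angle
at `s0`, then `s0, s1, s2` and the image `s3` of `c3 = c1 + c2` are the
vertices of a rectangle: `s1 - s0 ⊥ s2 - s0`, `s3 - s1 = s2 - s0` and
`s3 - s2 = s1 - s0`. -/
theorem bpsk_rectangle (n : ℕ)
    (C : Submodule (ZMod 2) (Fin n → ZMod 2))
    (c1 c2 : Fin n → ZMod 2) (h1 : c1 ∈ C) (h2 : c2 ∈ C)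
    (h1ne : c1 ≠ 0) (h2ne : c2 ≠ 0) (hne : c1 ≠ c2)
    (hright : ⟪bpsk n c1 - bpsk n 0, bpsk n c2 - bpsk n 0⟫ = 0) :
    ⟪bpsk n c1 - bpsk n 0, bpsk n c2 - bpsk n 0⟫ = 0 ∧
      bpsk n (c1 + c2) - bpsk n c1 = bpsk n c2 - bpsk n 0 ∧
      bpsk n (c1 + c2) - bpsk n c2 = bpsk n c1 - bpsk n 0 :=
  bpsk_rectangle_general n c1 c2 hright
end
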